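/- (Sufficient condition for optimality, Eq. (5).) Let (E_x)_{x∈X} be a POVM and set σ = ∑_{x∈X} E_x ρ_x. If the Hermitian matrix (σ + σ*)/2 − ρ_x is positive semidefinite for every x ∈ X (where σ* is the conjugate transpose of σ), then the POVM (E_x) is optimal, i.e. its guessing probability equals P_guess. -/

import Mathlib

/-!
For every POVM `G`, the hypothesis `M - ρ x ⪰ 0` with `M = (σ + σᴴ)/2` gives
`Re Tr(G x ρ x) ≤ Re Tr(G x M)`, because the trace of a product of two positive semidefinite
matrices is nonnegative. Summing over `x` and using `∑ G x = 1` bounds the guessing probability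
of `G` by `Re Tr M = Re Tr σ`, which is the guessing probability of `E`. So `E` attains the
supremum.
-/

open scoped ComplexOrder Matrix

namespace Matrix

variable {𝕜 ι : Type*} [RCLike 𝕜] [Fintype ι]

open scoped MatrixOrder in
lemma PosSemidef.trace_mul_nonneg {A B : Matrix ι ι 𝕜} (hA : A.PosSemidef) (hB : B.PosSemidef) :
    0 ≤ (A * B).trace := by
  classical
  have hS : (CFC.sqrt A)ᴴ = CFC.sqrt A :=
    (nonneg_iff_posSemidef.mp (CFC.sqrt_nonneg A)).isHermitian
  rw [← CFC.sqrt_mul_sqrt_self A hA.nonneg, ← trace_mul_cycle]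
  simpa [hS] using (hB.mul_mul_conjTranspose_same (CFC.sqrt A)).trace_nonneg

lemma PosSemidef.re_trace_mul_le_of_posSemidef_sub {G A B : Matrix ι ι 𝕜} (hG : G.PosSemidef)
    (hAB : (B - A).PosSemidef) : RCLike.re (G * A).trace ≤ RCLike.re (G * B).trace := by
  have h := RCLike.nonneg_iff.mp (hG.trace_mul_nonneg hAB) |>.1
  rw [mul_sub, trace_sub, map_sub] at h
  linarith

lemma re_trace_half_smul_add_conjTranspose (A : Matrix ι ι 𝕜) :
    RCLike.re ((1 / 2 : 𝕜) • (A + Aᴴ)).trace = RCLike.re A.trace := by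
  rw [trace_smul, trace_add, trace_conjTranspose, RCLike.star_def, RCLike.add_conj, smul_eq_mul,
    ← mul_assoc]
  norm_num

end Matrix

section Discrimination

variable {𝕜 ι X : Type*} [RCLike 𝕜] [Fintype ι] [Fintype X]

def guessingProb (ρ E : X → Matrix ι ι 𝕜) : ℝ :=
  ∑ x, RCLike.re (E x * ρ x).trace

lemma guessingProb_eq_re_trace_sum (ρ E : X → Matrix ι ι 𝕜) :
    guessingProb ρ E = RCLike.re (∑ x, E x * ρ x).trace := by
  simp [guessingProb, Matrix.trace_sum]

section POVM

variable [DecidableEq ι]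

def IsPOVM (E : X → Matrix ι ι 𝕜) : Prop :=
  (∀ x, (E x).PosSemidef) ∧ ∑ x, E x = 1

lemma IsPOVM.guessingProb_le {ρ G : X → Matrix ι ι 𝕜} (hG : IsPOVM G) {M : Matrix ι ι 𝕜}
    (hM : ∀ x, (M - ρ x).PosSemidef) : guessingProb ρ G ≤ RCLike.re M.trace :=
  calc guessingProb ρ G ≤ ∑ x, RCLike.re (G x * M).trace :=
        Finset.sum_le_sum fun x _ ↦ (hG.1 x).re_trace_mul_le_of_posSemidef_sub (hM x)
    _ = RCLike.re M.trace := by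
        rw [← map_sum, ← Matrix.trace_sum, ← Finset.sum_mul, hG.2, one_mul]

lemma IsPOVM.isGreatest_guessingProb {ρ E : X → Matrix ι ι 𝕜} (hE : IsPOVM E)
    (hcond : ∀ x, ((1 / 2 : 𝕜) • ((∑ y, E y * ρ y) + (∑ y, E y * ρ y)ᴴ) - ρ x).PosSemidef) :
    IsGreatest {p | ∃ G, IsPOVM G ∧ p = guessingProb ρ G} (guessingProb ρ E) := by
  refine ⟨⟨E, hE, rfl⟩, ?_⟩
  rintro _ ⟨G, hG, rfl⟩
  rw [guessingProb_eq_re_trace_sum ρ E, ← Matrix.re_trace_half_smul_add_conjTranspose]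
  exact hG.guessingProb_le hcond

end POVM

end Discrimination

theorem qsd_sufficient_optimality_general {n : ℕ} {X : Type*} [Fintype X]
    (ρ : X → Matrix (Fin n) (Fin n) ℂ)
    (E : X → Matrix (Fin n) (Fin n) ℂ)
    (hE : ∀ x, (E x).PosSemidef) (hEsum : (∑ x, E x) = 1)
    (hcond : ∀ x, ((1/2 : ℂ) • ((∑ y, E y * ρ y) + (∑ y, E y * ρ y)ᴴ) - ρ x).PosSemidef) :
    (∑ x, ((E x * ρ x).trace).re) =
      sSup {p : ℝ | ∃ G : X → Matrix (Fin n) (Fin n) ℂ,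
        (∀ x, (G x).PosSemidef) ∧ (∑ x, G x) = 1 ∧
        p = ∑ x, ((G x * ρ x).trace).re} := by
  have h := (IsPOVM.isGreatest_guessingProb ⟨hE, hEsum⟩ hcond).csSup_eq
  simp only [IsPOVM, and_assoc] at h
  exact h.symm

/-- Sufficient condition for optimality (Eq. (5)): if `E` is a POVM and
`σ = ∑ x, E x * ρ x` satisfies `(σ + σᴴ)/2 - ρ x ⪰ 0` for all `x`, then `E` is optimal. -/
theorem qsd_sufficient_optimality {n : ℕ} {X : Type*} [Fintype X]
    (ρ : X → Matrix (Fin n) (Fin n) ℂ)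
    (hρ : ∀ x, (ρ x).PosSemidef)
    (hρtr : (∑ x, (ρ x).trace) = 1)
    (E : X → Matrix (Fin n) (Fin n) ℂ)
    (hE : ∀ x, (E x).PosSemidef) (hEsum : (∑ x, E x) = 1)
    (hcond : ∀ x, ((1/2 : ℂ) • ((∑ y, E y * ρ y) + (∑ y, E y * ρ y)ᴴ) - ρ x).PosSemidef) :
    (∑ x, ((E x * ρ x).trace).re) =
      sSup {p : ℝ | ∃ G : X → Matrix (Fin n) (Fin n) ℂ,
        (∀ x, (G x).PosSemidef) ∧ (∑ x, G x) = 1 ∧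
        p = ∑ x, ((G x * ρ x).trace).re} :=
  qsd_sufficient_optimality_general ρ E hE hEsum hcond
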